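/- Let p, q be nonzero complex numbers. The 4×4 matrix R̂_II = [[1,0,0,0],[0,1-(pq)⁻¹,p⁻¹,0],[0,q⁻¹,0,0],[0,0,0,1]] satisfies the braid relation R̂₁₂ R̂₂₃ R̂₁₂ = R̂₂₃ R̂₁₂ R̂₂₃ as 8×8 matrices, where R̂₁₂ = R̂_II ⊗ I₂ and R̂₂₃ = I₂ ⊗ R̂_II. -/

import Mathlib

open Matrix Kronecker

/-- The type II braid matrix `R̂_II`, obtained from the type II R-matrix by the index flip
`R̂^{ij}_{kl} = R^{ji}_{kl}`; rows and columns are indexed by pairs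
(1,1),(1,2),(2,1),(2,2). -/
noncomputable def RhatII (p q : ℂ) : Matrix (Fin 2 × Fin 2) (Fin 2 × Fin 2) ℂ :=
  (!![1, 0, 0, 0;
      0, 1 - (p * q)⁻¹, p⁻¹, 0;
      0, q⁻¹, 0, 0;
      0, 0, 0, 1]).submatrix finProdFinEquiv finProdFinEquiv

/-- `R̂₁₂ = R̂ ⊗ I₂` as an 8×8 matrix (indices reassociated). -/
noncomputable def Rhat12 (R : Matrix (Fin 2 × Fin 2) (Fin 2 × Fin 2) ℂ) :
    Matrix (Fin 2 × Fin 2 × Fin 2) (Fin 2 × Fin 2 × Fin 2) ℂ :=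
  Matrix.reindex (Equiv.prodAssoc _ _ _) (Equiv.prodAssoc _ _ _)
    (R ⊗ₖ (1 : Matrix (Fin 2) (Fin 2) ℂ))

/-- `R̂₂₃ = I₂ ⊗ R̂` as an 8×8 matrix. -/
noncomputable def Rhat23 (R : Matrix (Fin 2 × Fin 2) (Fin 2 × Fin 2) ℂ) :
    Matrix (Fin 2 × Fin 2 × Fin 2) (Fin 2 × Fin 2 × Fin 2) ℂ :=
  (1 : Matrix (Fin 2) (Fin 2) ℂ) ⊗ₖ R

theorem Rhat12_apply (R : Matrix (Fin 2 × Fin 2) (Fin 2 × Fin 2) ℂ) (i j k l m n : Fin 2) :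
    Rhat12 R (i, j, k) (l, m, n) = R (i, j) (l, m) * (1 : Matrix (Fin 2) (Fin 2) ℂ) k n :=
  rfl

theorem Rhat23_apply (R : Matrix (Fin 2 × Fin 2) (Fin 2 × Fin 2) ℂ) (i j k l m n : Fin 2) :
    Rhat23 R (i, j, k) (l, m, n) = (1 : Matrix (Fin 2) (Fin 2) ℂ) i l * R (j, k) (m, n) :=
  rfl

def typeIIMatrix (a b : ℂ) : Matrix (Fin 2 × Fin 2) (Fin 2 × Fin 2) ℂ
  | (0, 0), (0, 0) => 1
  | (0, 1), (0, 1) => 1 - a * b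
  | (0, 1), (1, 0) => a
  | (1, 0), (0, 1) => b
  | (1, 1), (1, 1) => 1
  | _, _ => 0

theorem RhatII_eq_typeIIMatrix (p q : ℂ) : RhatII p q = typeIIMatrix p⁻¹ q⁻¹ := by
  ext ⟨i, j⟩ ⟨k, l⟩
  revert i j k l
  simp [Fin.forall_fin_two, RhatII, typeIIMatrix, finProdFinEquiv, mul_comm]

theorem typeIIMatrix_braid (a b : ℂ) :
    Rhat12 (typeIIMatrix a b) * Rhat23 (typeIIMatrix a b) * Rhat12 (typeIIMatrix a b) =
      Rhat23 (typeIIMatrix a b) * Rhat12 (typeIIMatrix a b) * Rhat23 (typeIIMatrix a b) := by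
  ext ⟨i, j, k⟩ ⟨l, m, n⟩
  simp only [mul_apply, Fintype.sum_prod_type, Fin.sum_univ_two, Rhat12_apply, Rhat23_apply]
  revert i j k l m n
  simp only [Fin.forall_fin_two, typeIIMatrix, one_apply_eq, one_apply_ne, ne_eq, one_ne_zero,
    zero_ne_one, not_false_eq_true, mul_one, mul_zero, one_mul, zero_mul, add_zero, zero_add,
    and_true, true_and]
  and_intros <;> ring

theorem typeII_braid_general (p q : ℂ) :
    Rhat12 (RhatII p q) * Rhat23 (RhatII p q) * Rhat12 (RhatII p q) =
      Rhat23 (RhatII p q) * Rhat12 (RhatII p q) * Rhat23 (RhatII p q) := by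
  rw [RhatII_eq_typeIIMatrix]
  exact typeIIMatrix_braid p⁻¹ q⁻¹

/-- The type II braid matrix satisfies the braid relation
`R̂₁₂ R̂₂₃ R̂₁₂ = R̂₂₃ R̂₁₂ R̂₂₃`. -/
theorem typeII_braid (p q : ℂ) (hp : p ≠ 0) (hq : q ≠ 0) :
    Rhat12 (RhatII p q) * Rhat23 (RhatII p q) * Rhat12 (RhatII p q) =
      Rhat23 (RhatII p q) * Rhat12 (RhatII p q) * Rhat23 (RhatII p q) :=
  typeII_braid_general p q
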